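/- arXiv:math/0301307 — 2 statements merged into one kernel-verified Lean document; each statement's English description precedes it below -/
import Mathlib

section
/- Let s_1 ≥ 0, t_1 ≥ 0, and γ_1 ≥ γ_2 ≥ 0 be real numbers. Then there exists a 2×2 complex matrix [[p, x],[y, q]] with |x| = s_1, |y| = t_1, and singular values γ_1 and γ_2, if and only if the following three inequalities hold: s_1 + t_1 ≤ γ_1 + γ_2, s_1 − t_1 ≤ γ_1 − γ_2, and t_1 − s_1 ≤ γ_1 − γ_2. -/
/-- `M` is a Hermitian matrix whose eigenvalues, with multiplicity, are `{μ i : i}`. -/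
def HasEigs {ι : Type} [Fintype ι] [DecidableEq ι] (M : Matrix ι ι ℂ) (μ : ι → ℝ) : Prop :=
  ∃ U : Matrix ι ι ℂ, U * U.conjTranspose = 1 ∧ U.conjTranspose * U = 1 ∧
    M = U * Matrix.diagonal (fun i => (μ i : ℂ)) * U.conjTranspose

/-- `X` has singular values `s 1 ≥ s 2 ≥ ... ≥ s q ≥ 0` where `q = min(#rows, #cols)`:
`s` is weakly decreasing and nonnegative on `1..q`, and the eigenvalues of `Xᴴ * X`
are `s 1 ^ 2, ..., s q ^ 2` together with `#cols - q` zeros. -/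
def HasSVals {ι κ : Type} [Fintype ι] [Fintype κ] [DecidableEq κ]
    (X : Matrix ι κ ℂ) (q : ℕ) (s : ℕ → ℝ) : Prop :=
  q = min (Fintype.card ι) (Fintype.card κ) ∧
  (∀ a b, 1 ≤ a → a ≤ b → b ≤ q → s b ≤ s a) ∧
  (∀ a, 1 ≤ a → a ≤ q → 0 ≤ s a) ∧
  ∃ e : κ ≃ Fin (Fintype.card κ),
    HasEigs (X.conjTranspose * X)
      (fun j => if (e j : ℕ) + 1 ≤ q then s ((e j : ℕ) + 1) ^ 2 else 0)

/-!
For a `2 × 2` matrix `Z` and `γ₁ ≥ γ₂ ≥ 0`, having singular values `γ₁, γ₂` is equivalent to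
`∑ |z_ij|² = tr (Zᴴ Z) = γ₁² + γ₂²` together with `|det Z| = γ₁ γ₂`, because a `2 × 2` Hermitian
matrix is unitarily diagonalised with the roots of its characteristic polynomial, which only
depends on trace and determinant.

Write `Z = [[p, x], [y, q]]`, `s = |x|`, `t = |y|`. The triangle inequality in
`det Z = p q - x y` gives `|s t - |p| |q|| ≤ γ₁ γ₂ ≤ |p| |q| + s t`; combined with
`2 |p| |q| ≤ |p|² + |q|² = γ₁² + γ₂² - s² - t²` this yields `(s + t)² ≤ (γ₁ + γ₂)²` and
`(s - t)² ≤ (γ₁ - γ₂)²`. Conversely, under these inequalities the real numbers `p, q` with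
`p + q = √((γ₁ - γ₂)² - (s - t)²)` and `p - q = √((γ₁ + γ₂)² - (s + t)²)` satisfy
`p² + q² = γ₁² + γ₂² - s² - t²` and `p q - s t = -γ₁ γ₂`, so `[[p, s], [t, q]]` works.
-/

open Matrix Finset

namespace HasEigs

variable {ι : Type} [Fintype ι] [DecidableEq ι] {M : Matrix ι ι ℂ} {μ : ι → ℝ}

theorem trace_eq (h : HasEigs M μ) : M.trace = ∑ i, (μ i : ℂ) := by
  obtain ⟨U, -, hUU, rfl⟩ := h
  rw [trace_mul_comm, ← Matrix.mul_assoc, hUU, Matrix.one_mul, trace_diagonal]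

theorem det_eq (h : HasEigs M μ) : M.det = ∏ i, (μ i : ℂ) := by
  obtain ⟨U, hUU, -, rfl⟩ := h
  have hU : U.det * Uᴴ.det = 1 := by rw [← det_mul, hUU, det_one]
  rw [det_mul, det_mul, det_diagonal, mul_right_comm, hU, one_mul]

theorem comp_equiv (h : HasEigs M μ) (σ : ι ≃ ι) : HasEigs M (μ ∘ σ) := by
  obtain ⟨U, hUU, hUU', rfl⟩ := h
  refine ⟨U.submatrix id σ, ?_, ?_, ?_⟩
  · simp [hUU]
  · rw [conjTranspose_submatrix, ← submatrix_mul _ _ _ _ _ Function.bijective_id, hUU',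
      submatrix_one_equiv]
  · have hD : diagonal (fun i => ((μ ∘ σ) i : ℂ)) = (diagonal fun i => (μ i : ℂ)).submatrix σ σ :=
      (submatrix_diagonal_equiv (fun i => (μ i : ℂ)) σ).symm
    rw [hD, conjTranspose_submatrix, submatrix_mul_equiv, submatrix_mul_equiv]
    rfl

end HasEigs

theorem Matrix.IsHermitian.hasEigs {ι : Type} [Fintype ι] [DecidableEq ι] {M : Matrix ι ι ℂ}
    (hM : M.IsHermitian) : HasEigs M hM.eigenvalues :=
  ⟨hM.eigenvectorUnitary, (Unitary.mem_iff.mp hM.eigenvectorUnitary.2).2,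
    (Unitary.mem_iff.mp hM.eigenvectorUnitary.2).1, hM.spectral_theorem⟩

theorem hasEigs_fin_two_of_trace_det {M : Matrix (Fin 2) (Fin 2) ℂ} (hM : M.IsHermitian)
    {a b : ℝ} (htr : M.trace = ((a + b : ℝ) : ℂ)) (hdet : M.det = ((a * b : ℝ) : ℂ)) :
    HasEigs M ![a, b] := by
  set ev := hM.eigenvalues
  have hsum : ev 0 + ev 1 = a + b := by
    simpa [Fin.sum_univ_two, ← Complex.ofReal_add] using hM.hasEigs.trace_eq.symm.trans htr
  have hprod : ev 0 * ev 1 = a * b := by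
    simpa [Fin.prod_univ_two, ← Complex.ofReal_mul] using hM.hasEigs.det_eq.symm.trans hdet
  have hroot : (ev 0 - a) * (ev 0 - b) = 0 := by linear_combination ev 0 * hsum - hprod
  rcases mul_eq_zero.mp hroot with h0 | h0
  · convert hM.hasEigs
    ext j
    fin_cases j <;> simp only [Fin.zero_eta, Fin.mk_one, cons_val_zero, cons_val_one,
      cons_val_fin_one] <;> linarith
  · convert hM.hasEigs.comp_equiv (Equiv.swap 0 1)
    ext j
    fin_cases j <;> simp only [Fin.zero_eta, Fin.mk_one, cons_val_zero, cons_val_one,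
      cons_val_fin_one, Function.comp_apply, Equiv.swap_apply_left,
      Equiv.swap_apply_right] <;> linarith

namespace HasSVals

variable {ι κ : Type} [Fintype ι] [Fintype κ] [DecidableEq κ] {X : Matrix ι κ ℂ} {q : ℕ}
  {s : ℕ → ℝ}

theorem trace_conjTranspose_mul_self (h : HasSVals X q s) :
    (Xᴴ * X).trace = ∑ i ∈ range q, ((s (i + 1) ^ 2 : ℝ) : ℂ) := by
  obtain ⟨hq, -, -, e, hE⟩ := h
  set μ : ℕ → ℂ := fun k => ((if k + 1 ≤ q then s (k + 1) ^ 2 else 0 : ℝ) : ℂ)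
  have hhead : ∑ k ∈ range q, μ k = ∑ k ∈ range q, ((s (k + 1) ^ 2 : ℝ) : ℂ) :=
    sum_congr rfl fun k hk => by simp only [μ, if_pos (Nat.succ_le_of_lt (mem_range.mp hk))]
  have htail : ∑ k ∈ Ico q (Fintype.card κ), μ k = 0 :=
    sum_eq_zero fun k hk => by
      simp only [μ, if_neg (by simp at hk; omega : ¬k + 1 ≤ q), Complex.ofReal_zero]
  rw [hE.trace_eq, e.sum_comp (fun k : Fin _ => μ k), Fin.sum_univ_eq_sum_range μ,
    ← sum_range_add_sum_Ico _ (hq ▸ min_le_right _ _ : q ≤ Fintype.card κ), hhead, htail,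
    add_zero]

theorem det_conjTranspose_mul_self (h : HasSVals X q s)
    (hκι : Fintype.card κ ≤ Fintype.card ι) :
    (Xᴴ * X).det = ∏ i ∈ range q, ((s (i + 1) ^ 2 : ℝ) : ℂ) := by
  obtain ⟨hq, -, -, e, hE⟩ := h
  rw [min_eq_right hκι] at hq
  subst hq
  set μ : ℕ → ℂ := fun k => ((if k + 1 ≤ Fintype.card κ then s (k + 1) ^ 2 else 0 : ℝ) : ℂ)
  rw [hE.det_eq, e.prod_comp (fun k : Fin _ => μ k), Fin.prod_univ_eq_prod_range μ]
  exact prod_congr rfl fun k hk => by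
    simp only [μ, if_pos (Nat.succ_le_of_lt (mem_range.mp hk))]

end HasSVals

theorem Matrix.trace_conjTranspose_mul_self_eq_sum_norm_sq {ι κ : Type} [Fintype ι] [Fintype κ]
    (X : Matrix ι κ ℂ) : (Xᴴ * X).trace = ((∑ i, ∑ j, ‖X i j‖ ^ 2 : ℝ) : ℂ) := by
  rw [sum_comm]
  push_cast
  simp only [trace, diag, mul_apply, conjTranspose_apply, Complex.star_def, Complex.conj_mul']

theorem Matrix.det_conjTranspose_mul_self_eq_norm_sq {ι : Type} [Fintype ι] [DecidableEq ι]
    (X : Matrix ι ι ℂ) : (Xᴴ * X).det = ((‖X.det‖ ^ 2 : ℝ) : ℂ) := by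
  rw [det_mul, det_conjTranspose, Complex.star_def, Complex.conj_mul', Complex.ofReal_pow]

theorem hasSVals_fin_two_iff {Z : Matrix (Fin 2) (Fin 2) ℂ} {γ1 γ2 : ℝ} (h12 : γ2 ≤ γ1)
    (h2 : 0 ≤ γ2) :
    HasSVals Z 2 (fun a => if a ≤ 1 then γ1 else γ2) ↔
      ∑ i, ∑ j, ‖Z i j‖ ^ 2 = γ1 ^ 2 + γ2 ^ 2 ∧ ‖Z.det‖ = γ1 * γ2 := by
  rw [← Complex.ofReal_inj, ← trace_conjTranspose_mul_self_eq_sum_norm_sq,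
    ← pow_left_inj₀ (norm_nonneg _) (mul_nonneg (h2.trans h12) h2) two_ne_zero,
    ← Complex.ofReal_inj, ← det_conjTranspose_mul_self_eq_norm_sq]
  constructor
  · intro h
    constructor
    · simpa [sum_range_succ] using h.trace_conjTranspose_mul_self
    · simpa [prod_range_succ, mul_pow] using h.det_conjTranspose_mul_self le_rfl
  · rintro ⟨htr, hdet⟩
    refine ⟨by simp, ?_, ?_, finCongr (Fintype.card_fin 2).symm, ?_⟩
    · intro a b ha hab hb
      dsimp only
      split_ifs <;> first | rfl | linarith
    · intro a ha hb
      dsimp only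
      split_ifs <;> linarith
    · convert hasEigs_fin_two_of_trace_det (isHermitian_conjTranspose_mul_self Z)
        (a := γ1 ^ 2) (b := γ2 ^ 2) (htr.trans (by push_cast; ring))
        (hdet.trans (by push_cast; ring)) using 1
      funext j
      fin_cases j <;> rfl

theorem norm_offDiag_bounds_of_norm_sq_sum_of_norm_det {p x y q : ℂ} {γ1 γ2 : ℝ}
    (h12 : γ2 ≤ γ1) (h2 : 0 ≤ γ2)
    (hfro : ‖p‖ ^ 2 + ‖x‖ ^ 2 + ‖y‖ ^ 2 + ‖q‖ ^ 2 = γ1 ^ 2 + γ2 ^ 2)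
    (hdet : ‖p * q - x * y‖ = γ1 * γ2) :
    ‖x‖ + ‖y‖ ≤ γ1 + γ2 ∧ ‖x‖ - ‖y‖ ≤ γ1 - γ2 ∧ ‖y‖ - ‖x‖ ≤ γ1 - γ2 := by
  have hup : γ1 * γ2 ≤ ‖p‖ * ‖q‖ + ‖x‖ * ‖y‖ := by
    simpa only [hdet, norm_mul] using norm_sub_le (p * q) (x * y)
  have hlow : ‖x‖ * ‖y‖ ≤ ‖p‖ * ‖q‖ + γ1 * γ2 := by
    have := norm_sub_norm_le (x * y) (p * q)
    rw [norm_sub_rev, hdet, norm_mul, norm_mul] at this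
    linarith
  have hpq := two_mul_le_add_sq ‖p‖ ‖q‖
  have hsum : (‖x‖ + ‖y‖) ^ 2 ≤ (γ1 + γ2) ^ 2 := by nlinarith
  have hdiff : (‖x‖ - ‖y‖) ^ 2 ≤ (γ1 - γ2) ^ 2 := by nlinarith
  obtain ⟨hyx, hxy⟩ := abs_le_of_sq_le_sq' hdiff (sub_nonneg.mpr h12)
  exact ⟨le_of_sq_le_sq hsum (by linarith), hxy, by linarith⟩

theorem exists_real_diag_of_offDiag_bounds {s t γ1 γ2 : ℝ} (hs : 0 ≤ s) (ht : 0 ≤ t)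
    (hA : s + t ≤ γ1 + γ2) (hB : s - t ≤ γ1 - γ2) (hC : t - s ≤ γ1 - γ2) :
    ∃ p q : ℝ, p ^ 2 + s ^ 2 + t ^ 2 + q ^ 2 = γ1 ^ 2 + γ2 ^ 2 ∧ p * q - s * t = -(γ1 * γ2) := by
  set u := √((γ1 - γ2) ^ 2 - (s - t) ^ 2)
  set v := √((γ1 + γ2) ^ 2 - (s + t) ^ 2)
  have hu : u ^ 2 = (γ1 - γ2) ^ 2 - (s - t) ^ 2 := Real.sq_sqrt (by nlinarith)
  have hv : v ^ 2 = (γ1 + γ2) ^ 2 - (s + t) ^ 2 := Real.sq_sqrt (by nlinarith)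
  exact ⟨(u + v) / 2, (u - v) / 2, by linear_combination hu / 2 + hv / 2,
    by linear_combination hu / 4 - hv / 4⟩

theorem stmt16 (s1 t1 γ1 γ2 : ℝ) (hs : 0 ≤ s1) (ht : 0 ≤ t1)
    (h12 : γ2 ≤ γ1) (h2 : 0 ≤ γ2) :
    (∃ Z : Matrix (Fin 2) (Fin 2) ℂ,
        ‖Z 0 1‖ = s1 ∧ ‖Z 1 0‖ = t1 ∧
        HasSVals Z 2 (fun a => if a ≤ 1 then γ1 else γ2)) ↔
    (s1 + t1 ≤ γ1 + γ2 ∧ s1 - t1 ≤ γ1 - γ2 ∧ t1 - s1 ≤ γ1 - γ2) := by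
  simp_rw [hasSVals_fin_two_iff h12 h2, Fin.sum_univ_two, det_fin_two]
  constructor
  · rintro ⟨Z, rfl, rfl, hfro, hdet⟩
    exact norm_offDiag_bounds_of_norm_sq_sum_of_norm_det h12 h2 (by linarith) hdet
  · rintro ⟨hA, hB, hC⟩
    obtain ⟨p, q, hfro, hdet⟩ := exists_real_diag_of_offDiag_bounds hs ht hA hB hC
    refine ⟨!![(p : ℂ), s1; t1, q], ?_, ?_, ?_, ?_⟩ <;>
      simp only [of_apply, cons_val', cons_val_zero, cons_val_one, cons_val_fin_one,
        ← Complex.ofReal_mul, ← Complex.ofReal_sub, Complex.norm_real, Real.norm_eq_abs, sq_abs]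
    · exact abs_of_nonneg hs
    · exact abs_of_nonneg ht
    · linarith
    · rw [hdet, abs_neg, abs_of_nonneg (mul_nonneg (h2.trans h12) h2)]
end

section
/- Fix positive integers m and p. Then every coloring of {1,...,mp} with colors {1,...,m}, each color used exactly p times, can be transformed by a finite sequence of repainting operations into the canonical coloring χ₀, where χ₀ assigns to each j ∈ {1,...,mp} the unique color c ∈ {1,...,m} with j ≡ c (mod m). -/
/-- The canonical color of `j`: the unique `c ∈ {1, ..., m}` with `j ≡ c (mod m)`. -/
def canonColor (m j : ℕ) : ℕ := if j % m = 0 then m else j % m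

/-- `χ` is a coloring of `{1, ..., m * p}` with colors `{1, ..., m}`,
each color used exactly `p` times. -/
def IsColoring (m p : ℕ) (χ : ℕ → ℕ) : Prop :=
  (∀ j ∈ Finset.Icc 1 (m * p), χ j ∈ Finset.Icc 1 m) ∧
  (∀ c ∈ Finset.Icc 1 m, ((Finset.Icc 1 (m * p)).filter (fun j => χ j = c)).card = p)

/-- A repainting operation: choose two distinct colors `c, c'`; keep all indices of other
colors unchanged, and recolor the indices colored `c` or `c'` so that, in increasing order,
their colors alternate between `c` and `c'` (starting with either). Alternation is expressed
by: consecutive such indices receive different colors. -/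
def Repaint (m p : ℕ) (χ χ' : ℕ → ℕ) : Prop :=
  ∃ c c', c ∈ Finset.Icc 1 m ∧ c' ∈ Finset.Icc 1 m ∧ c ≠ c' ∧
    (∀ j ∈ Finset.Icc 1 (m * p), χ j ≠ c ∧ χ j ≠ c' → χ' j = χ j) ∧
    (∀ j ∈ Finset.Icc 1 (m * p), (χ j = c ∨ χ j = c') → (χ' j = c ∨ χ' j = c')) ∧
    (∀ j ∈ Finset.Icc 1 (m * p), ∀ j' ∈ Finset.Icc 1 (m * p),
      (χ j = c ∨ χ j = c') → (χ j' = c ∨ χ j' = c') → j < j' →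
      (∀ l ∈ Finset.Icc 1 (m * p), (χ l = c ∨ χ l = c') → ¬(j < l ∧ l < j')) →
      χ' j ≠ χ' j') ∧
    (∀ j, j ∉ Finset.Icc 1 (m * p) → χ' j = χ j)

private lemma canonColor_mem {m : ℕ} (hm : 0 < m) (j : ℕ) :
    canonColor m j ∈ Finset.Icc 1 m := by
  have h := Nat.mod_lt j hm
  unfold canonColor
  split_ifs with h0 <;> simp [Finset.mem_Icc] <;> omega
private lemma canonColor_eq_iff {m v : ℕ} (hm : 0 < m) (hv1 : 1 ≤ v) (hvm : v ≤ m)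
    (x : ℕ) : canonColor m x = v ↔ x % m = v % m := by
  have h := Nat.mod_lt x hm
  unfold canonColor
  rcases eq_or_lt_of_le hvm with rfl | hlt
  · rw [Nat.mod_self]
    split_ifs with h0 <;> omega
  · rw [Nat.mod_eq_of_lt hlt]
    split_ifs with h0 <;> omega
private lemma canon_decomp {m v : ℕ} (hm : 0 < m) (hv1 : 1 ≤ v) (hvm : v ≤ m)
    {x : ℕ} (hx : 1 ≤ x) (hc : canonColor m x = v) : ∃ t, x = v + m * t := by
  have hmod : x % m = v % m := (canonColor_eq_iff hm hv1 hvm x).mp hc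
  have hxv : v ≤ x := by
    rcases Nat.lt_or_ge x v with hlt | hge
    · exfalso
      have hx2 : x % m = x := Nat.mod_eq_of_lt (by omega)
      rcases eq_or_lt_of_le hvm with rfl | hvm'
      · rw [Nat.mod_self] at hmod; omega
      · rw [Nat.mod_eq_of_lt hvm'] at hmod; omega
    · exact hge
  have hdvd : m ∣ x - v := (Nat.modEq_iff_dvd' hxv).mp hmod.symm
  obtain ⟨t, ht⟩ := hdvd
  exact ⟨t, by omega⟩
private lemma count_residue {m : ℕ} (hm : 0 < m) {v : ℕ} (hv1 : 1 ≤ v) (hvm : v ≤ m)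
    {N l : ℕ} (hlN : l ≤ N) :
    ((Finset.Icc 1 N).filter (fun x => canonColor m x = v ∧ x < l)).card
      = (l + m - 1 - v) / m := by
  have key : (Finset.Icc 1 N).filter (fun x => canonColor m x = v ∧ x < l)
      = (Finset.range ((l + m - 1 - v) / m)).image (fun s => v + m * s) := by
    ext x
    simp only [Finset.mem_filter, Finset.mem_Icc, Finset.mem_image, Finset.mem_range]
    constructor
    · rintro ⟨⟨hx1, hxN⟩, hc, hxl⟩
      obtain ⟨t, ht⟩ := canon_decomp hm hv1 hvm hx1 hc
      refine ⟨t, ?_, ht.symm⟩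
      have : t + 1 ≤ (l + m - 1 - v) / m := by
        rw [Nat.le_div_iff_mul_le hm]
        have hm' : (t+1) * m = m * t + m := by ring
        omega
      omega
    · rintro ⟨t, htK, rfl⟩
      have hmul : (t + 1) * m ≤ l + m - 1 - v := by
        rw [← Nat.le_div_iff_mul_le hm]
        omega
      have hm' : (t+1) * m = m * t + m := by ring
      have hxl : v + m * t < l := by omega
      refine ⟨⟨by omega, by omega⟩, ?_, hxl⟩
      rw [canonColor_eq_iff hm hv1 hvm]
      exact Nat.add_mul_mod_self_left v m t
  rw [key, Finset.card_image_of_injective _ (fun s t h => Nat.eq_of_mul_eq_mul_left hm (by omega)), Finset.card_range]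
private lemma rank_parity {m : ℕ} (hm : 0 < m) {a b : ℕ} (ha1 : 1 ≤ a) (hbm : b ≤ m)
    (hab : a < b) {N l : ℕ} (hl1 : 1 ≤ l) (hlN : l ≤ N)
    (hcl : canonColor m l = a ∨ canonColor m l = b) :
    canonColor m l
      = (if ((Finset.Icc 1 N).filter
            (fun x => (canonColor m x = a ∨ canonColor m x = b) ∧ x < l)).card % 2 = 0
         then a else b) := by
  have ham : a ≤ m := le_trans hab.le hbm
  have hb1 : 1 ≤ b := by omega
  have hsplit : (Finset.Icc 1 N).filter (fun x => (canonColor m x = a ∨ canonColor m x = b) ∧ x < l)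
      = ((Finset.Icc 1 N).filter (fun x => canonColor m x = a ∧ x < l))
        ∪ ((Finset.Icc 1 N).filter (fun x => canonColor m x = b ∧ x < l)) := by
    ext x
    simp only [Finset.mem_filter, Finset.mem_union]
    tauto
  have hdisj : Disjoint ((Finset.Icc 1 N).filter (fun x => canonColor m x = a ∧ x < l))
      ((Finset.Icc 1 N).filter (fun x => canonColor m x = b ∧ x < l)) := by
    rw [Finset.disjoint_left]
    intro x hx hy
    simp only [Finset.mem_filter] at hx hy
    omega
  rw [hsplit, Finset.card_union_of_disjoint hdisj,
    count_residue hm ha1 ham hlN, count_residue hm hb1 hbm hlN]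
  rcases hcl with hc | hc
  · obtain ⟨t, ht⟩ := canon_decomp hm ha1 ham hl1 hc
    have e1 : l + m - 1 - a = (m - 1) + m * t := by omega
    have e2 : l + m - 1 - b = (m - 1 - (b - a)) + m * t := by omega
    rw [e1, e2, Nat.add_mul_div_left _ _ hm, Nat.add_mul_div_left _ _ hm,
      Nat.div_eq_of_lt (by omega), Nat.div_eq_of_lt (by omega)]
    rw [if_pos (by omega)]
    exact hc
  · obtain ⟨t, ht⟩ := canon_decomp hm hb1 hbm hl1 hc
    have e1 : l + m - 1 - b = (m - 1) + m * t := by omega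
    have hm' : m * (t + 1) = m * t + m := by ring
    have e2 : l + m - 1 - a = (b - a - 1) + m * (t + 1) := by omega
    rw [e1, e2, Nat.add_mul_div_left _ _ hm, Nat.add_mul_div_left _ _ hm,
      Nat.div_eq_of_lt (by omega), Nat.div_eq_of_lt (by omega)]
    rw [if_neg (by omega)]
    exact hc
private lemma card_range_even (n : ℕ) :
    ((Finset.range (2*n)).filter (fun k => k % 2 = 0)).card = n := by
  induction n with
  | zero => simp
  | succ q ih =>
    have h : 2 * (q+1) = (2*q + 1) + 1 := by ring
    rw [h, Finset.range_add_one, Finset.filter_insert, if_neg (by omega),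
      Finset.range_add_one, Finset.filter_insert, if_pos (by omega),
      Finset.card_insert_of_notMem (by simp), ih]
private lemma rank_succ {S : Finset ℕ} {j j' : ℕ} (hj : j ∈ S) (hj' : j' ∈ S) (hjj : j < j')
    (hgap : ∀ l ∈ S, ¬(j < l ∧ l < j')) :
    (S.filter (fun x => x < j')).card = (S.filter (fun x => x < j)).card + 1 := by
  have hins : S.filter (fun x => x < j') = insert j (S.filter (fun x => x < j)) := by
    ext x
    simp only [Finset.mem_filter, Finset.mem_insert]
    constructor
    · rintro ⟨hx, hxl⟩
      rcases lt_trichotomy x j with h | h | h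
      · exact Or.inr ⟨hx, h⟩
      · exact Or.inl h
      · exact absurd ⟨h, hxl⟩ (hgap x hx)
    · rintro (rfl | ⟨hx, hxl⟩)
      · exact ⟨hj, hjj⟩
      · exact ⟨hx, lt_trans hxl hjj⟩
  rw [hins, Finset.card_insert_of_notMem (by simp)]
private lemma rank_lt_rank {S : Finset ℕ} {j j' : ℕ} (hj : j ∈ S) (hjj : j < j') :
    (S.filter (fun x => x < j)).card < (S.filter (fun x => x < j')).card := by
  refine Finset.card_lt_card ⟨fun x hx => ?_, fun hsub => ?_⟩
  · simp only [Finset.mem_filter] at hx ⊢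
    exact ⟨hx.1, lt_trans hx.2 hjj⟩
  · have hjmem : j ∈ S.filter (fun x => x < j') := by
      simp only [Finset.mem_filter]; exact ⟨hj, hjj⟩
    have := hsub hjmem
    simp only [Finset.mem_filter] at this
    omega
private lemma card_rank_even {S : Finset ℕ} {n : ℕ} (h : S.card = 2*n) :
    (S.filter (fun j => (S.filter (fun x => x < j)).card % 2 = 0)).card = n := by
  classical
  set r : ℕ → ℕ := fun j => (S.filter (fun x => x < j)).card with hr
  have hinj : Set.InjOn r S := by
    intro x hx y hy hxy
    by_contra hne
    rcases lt_or_gt_of_ne hne with hlt | hlt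
    · exact absurd hxy (Nat.ne_of_lt (rank_lt_rank hx hlt))
    · exact absurd hxy.symm (Nat.ne_of_lt (rank_lt_rank hy hlt))
  have himg : S.image r = Finset.range (2*n) := by
    apply Finset.eq_of_subset_of_card_le
    · intro k hk
      simp only [Finset.mem_image] at hk
      obtain ⟨j, hj, rfl⟩ := hk
      simp only [Finset.mem_range]
      have : r j < S.card := by
        refine Finset.card_lt_card ⟨Finset.filter_subset _ _, fun hsub => ?_⟩
        have := hsub hj
        simp only [Finset.mem_filter] at this
        omega
      omega
    · rw [Finset.card_range, Finset.card_image_of_injOn hinj, h]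
  have himgf : (S.filter (fun j => r j % 2 = 0)).image r
      = (Finset.range (2*n)).filter (fun k => k % 2 = 0) := by
    rw [← himg, Finset.filter_image]
  have hcard : ((S.filter (fun j => r j % 2 = 0)).image r).card
      = (S.filter (fun j => r j % 2 = 0)).card :=
    Finset.card_image_of_injOn (hinj.mono (by
      intro x hx
      exact Finset.mem_coe.mpr (Finset.filter_subset _ _ (Finset.mem_coe.mp hx))))
  have : (S.filter (fun j => r j % 2 = 0)).card = n := by
    rw [← hcard, himgf, card_range_even]
  exact this
private lemma card_rank_odd {S : Finset ℕ} {n : ℕ} (h : S.card = 2*n) :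
    (S.filter (fun j => ¬((S.filter (fun x => x < j)).card % 2 = 0))).card = n := by
  classical
  have htot := Finset.card_filter_add_card_filter_not
    (s := S) (p := fun j => (S.filter (fun x => x < j)).card % 2 = 0)
  have he := card_rank_even h
  omega
private lemma step (m p : ℕ) (hm : 0 < m) (χ : ℕ → ℕ) (hχ : IsColoring m p χ)
    (j₀ : ℕ) (hj₀ : j₀ ∈ Finset.Icc 1 (m*p))
    (hpre : ∀ l ∈ Finset.Icc 1 (m*p), l < j₀ → χ l = canonColor m l)
    (hne : χ j₀ ≠ canonColor m j₀) :
    ∃ χ', Repaint m p χ χ' ∧ IsColoring m p χ' ∧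
      ∀ l ∈ Finset.Icc 1 (m*p), l ≤ j₀ → χ' l = canonColor m l := by
  classical
  set N := m * p with hN
  set c := canonColor m j₀ with hc
  set c' := χ j₀ with hc'
  have hcI : c ∈ Finset.Icc 1 m := canonColor_mem hm j₀
  have hc'I : c' ∈ Finset.Icc 1 m := hχ.1 j₀ hj₀
  have hcc' : c ≠ c' := fun h => hne h.symm
  have hc1 := Finset.mem_Icc.mp hcI
  have hc'1 := Finset.mem_Icc.mp hc'I
  set S := (Finset.Icc 1 N).filter (fun l => χ l = c ∨ χ l = c') with hS
  set r : ℕ → ℕ := fun l => (S.filter (fun x => x < l)).card with hrdef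
  set A := min c c' with hA
  set B := max c c' with hB
  have hkey : (A = c ∧ B = c') ∨ (A = c' ∧ B = c) := by
    rcases le_total c c' with h | h
    · exact Or.inl ⟨min_eq_left h, max_eq_right h⟩
    · exact Or.inr ⟨min_eq_right h, max_eq_left h⟩
  have hABle : A ≤ B := min_le_max
  have hAB : A < B := by rcases hkey with ⟨h1, h2⟩ | ⟨h1, h2⟩ <;> omega
  have hABset : ∀ x, ((x = A ∨ x = B) ↔ (x = c ∨ x = c')) := by
    intro x
    rcases hkey with ⟨h1, h2⟩ | ⟨h1, h2⟩ <;> rw [h1, h2] <;> tauto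
  have hA1 : 1 ≤ A := by rcases hkey with ⟨h1, _⟩ | ⟨h1, _⟩ <;> omega
  have hBm : B ≤ m := by rcases hkey with ⟨_, h2⟩ | ⟨_, h2⟩ <;> omega
  set χ' : ℕ → ℕ := fun l => if l ∈ S then (if r l % 2 = 0 then A else B) else χ l with hχ'
  have hj₀S : j₀ ∈ S := by
    rw [hS, Finset.mem_filter]
    exact ⟨hj₀, Or.inr rfl⟩
  have hvout : ∀ j, j ∉ S → χ' j = χ j := by
    intro j hj
    rw [hχ']
    simp only [if_neg hj]
  have hvin : ∀ j ∈ S, χ' j = A ∨ χ' j = B := by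
    intro j hj
    rw [hχ']
    simp only [if_pos hj]
    split_ifs <;> tauto
  have hmemS : ∀ j, j ∈ S ↔ (j ∈ Finset.Icc 1 N ∧ (χ j = c ∨ χ j = c')) := by
    intro j; rw [hS, Finset.mem_filter]
  have hScard : S.card = 2 * p := by
    have h1 : (Finset.Icc 1 N).filter (fun l => χ l = c)
        ∪ (Finset.Icc 1 N).filter (fun l => χ l = c') = S := (Finset.filter_or _ _ _).symm
    have hdisj : Disjoint ((Finset.Icc 1 N).filter (fun l => χ l = c))
        ((Finset.Icc 1 N).filter (fun l => χ l = c')) := by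
      rw [Finset.disjoint_left]
      intro x hx hy
      simp only [Finset.mem_filter] at hx hy
      exact hcc' (hx.2 ▸ hy.2 ▸ rfl)
    have := Finset.card_union_of_disjoint hdisj
    rw [h1, hχ.2 c hcI, hχ.2 c' hc'I] at this
    omega
  refine ⟨χ', ⟨c, c', hcI, hc'I, hcc', ?_, ?_, ?_, ?_⟩, ⟨?_, ?_⟩, ?_⟩
  · -- untouched colors
    intro j hj ⟨h1, h2⟩
    exact hvout j (by rw [hmemS]; tauto)
  · -- stays in {c, c'}
    intro j hj hor
    have hjS : j ∈ S := (hmemS j).mpr ⟨hj, hor⟩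
    exact (hABset (χ' j)).mp (hvin j hjS)
  · -- alternation
    intro j hj j' hj' horj horj' hlt hgap
    have hjS : j ∈ S := (hmemS j).mpr ⟨hj, horj⟩
    have hj'S : j' ∈ S := (hmemS j').mpr ⟨hj', horj'⟩
    have hgap' : ∀ l ∈ S, ¬(j < l ∧ l < j') := by
      intro l hl
      rw [hmemS] at hl
      exact hgap l hl.1 hl.2
    have hr : r j' = r j + 1 := rank_succ hjS hj'S hlt hgap'
    rw [hχ']
    simp only [if_pos hjS, if_pos hj'S, hr]
    split_ifs <;> omega
  · -- outside
    intro j hj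
    exact hvout j (by rw [hmemS]; tauto)
  · -- values in range
    intro j hj
    by_cases hjS : j ∈ S
    · rcases hvin j hjS with h | h <;> rw [h] <;> rw [Finset.mem_Icc] <;> omega
    · rw [hvout j hjS]; exact hχ.1 j hj
  · -- counts
    intro d hd
    by_cases hdA : d = A
    · subst hdA
      have hEq : (Finset.Icc 1 N).filter (fun j => χ' j = A)
          = S.filter (fun j => r j % 2 = 0) := by
        ext j
        simp only [Finset.mem_filter]
        constructor
        · rintro ⟨hj, hv⟩
          by_cases hjS : j ∈ S
          · refine ⟨(hmemS j).mpr ((hmemS j).mp hjS), ?_⟩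
            by_contra hodd
            have hB2 : χ' j = B := by rw [hχ']; simp only [if_pos hjS, if_neg hodd]
            omega
          · exfalso
            rw [hvout j hjS] at hv
            exact hjS ((hmemS j).mpr ⟨hj, (hABset A).mp (Or.inl rfl) |> fun h => hv ▸ h⟩)
        · rintro ⟨hjS, hev⟩
          refine ⟨((hmemS j).mp hjS).1, ?_⟩
          rw [hχ']
          simp only [if_pos hjS, if_pos hev]
      rw [hEq]
      exact card_rank_even hScard
    · by_cases hdB : d = B
      · subst hdB
        have hEq : (Finset.Icc 1 N).filter (fun j => χ' j = B)
            = S.filter (fun j => ¬(r j % 2 = 0)) := by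
          ext j
          simp only [Finset.mem_filter]
          constructor
          · rintro ⟨hj, hv⟩
            by_cases hjS : j ∈ S
            · refine ⟨hjS, ?_⟩
              intro hev
              have hA2 : χ' j = A := by rw [hχ']; simp only [if_pos hjS, if_pos hev]
              omega
            · exfalso
              rw [hvout j hjS] at hv
              have : χ j = c ∨ χ j = c' := (hABset B).mp (Or.inr rfl) |> fun h => hv ▸ h
              exact hjS ((hmemS j).mpr ⟨hj, this⟩)
          · rintro ⟨hjS, hodd⟩
            refine ⟨((hmemS j).mp hjS).1, ?_⟩
            rw [hχ']
            simp only [if_pos hjS, if_neg hodd]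
        rw [hEq]
        exact card_rank_odd hScard
      · have hdc : d ≠ c ∧ d ≠ c' := by
          have := hABset d
          tauto
        have hEq : (Finset.Icc 1 N).filter (fun j => χ' j = d)
            = (Finset.Icc 1 N).filter (fun j => χ j = d) := by
          ext j
          simp only [Finset.mem_filter]
          constructor
          · rintro ⟨hj, hv⟩
            by_cases hjS : j ∈ S
            · exfalso
              rcases hvin j hjS with h | h <;> omega
            · rw [hvout j hjS] at hv
              exact ⟨hj, hv⟩
          · rintro ⟨hj, hv⟩
            have hjS : j ∉ S := by
              rw [hmemS]
              rintro ⟨-, h | h⟩ <;> omega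
            rw [hvout j hjS]
            exact ⟨hj, hv⟩
        rw [hEq]
        exact hχ.2 d hd
  · -- prefix
    intro l hl hle
    have hl2 := Finset.mem_Icc.mp hl
    by_cases hlS : l ∈ S
    · have hT : S.filter (fun x => x < l)
          = (Finset.Icc 1 N).filter
              (fun x => (canonColor m x = A ∨ canonColor m x = B) ∧ x < l) := by
        ext x
        simp only [hmemS, Finset.mem_filter]
        constructor
        · rintro ⟨⟨hxI, hxc⟩, hxl⟩
          have hxj : x < j₀ := lt_of_lt_of_le hxl hle
          have hcanon := hpre x hxI hxj
          refine ⟨hxI, ?_, hxl⟩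
          rw [← hcanon]
          exact (hABset (χ x)).mpr hxc
        · rintro ⟨hxI, hxc, hxl⟩
          have hxj : x < j₀ := lt_of_lt_of_le hxl hle
          have hcanon := hpre x hxI hxj
          rw [← hcanon] at hxc
          exact ⟨⟨hxI, (hABset (χ x)).mp hxc⟩, hxl⟩
      have hlT : canonColor m l = A ∨ canonColor m l = B := by
        rcases eq_or_lt_of_le hle with rfl | hlt
        · exact (hABset c).mpr (Or.inl rfl) |> fun h => hc ▸ h
        · have hcanon := hpre l hl hlt
          rw [← hcanon]
          exact (hABset (χ l)).mpr ((hmemS l).mp hlS).2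
      have hpar := rank_parity hm hA1 hBm hAB hl2.1 hl2.2 hlT
      rw [hχ']
      simp only [if_pos hlS, hrdef]
      rw [hT, ← hpar]
    · have hlj : l ≠ j₀ := fun h => hlS (h ▸ hj₀S)
      have hlt : l < j₀ := lt_of_le_of_ne hle hlj
      rw [hvout l hlS]
      exact hpre l hl hlt
private lemma main_ind (m p : ℕ) (hm : 0 < m) :
    ∀ n (χ : ℕ → ℕ), IsColoring m p χ →
      (∀ l ∈ Finset.Icc 1 (m*p), l ≤ m*p - n → χ l = canonColor m l) →
      ∃ χ', Relation.ReflTransGen (Repaint m p) χ χ' ∧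
        ∀ j ∈ Finset.Icc 1 (m*p), χ' j = canonColor m j := by
  intro n
  induction n with
  | zero =>
    intro χ hχ hpre
    exact ⟨χ, Relation.ReflTransGen.refl,
      fun j hj => hpre j hj (by have := Finset.mem_Icc.mp hj; omega)⟩
  | succ n ih =>
    intro χ hχ hpre
    by_cases hall : ∀ l ∈ Finset.Icc 1 (m*p), l ≤ m*p - n → χ l = canonColor m l
    · exact ih χ hχ hall
    · push_neg at hall
      obtain ⟨j₀, hj₀, hle, hne⟩ := hall
      have hj₀2 := Finset.mem_Icc.mp hj₀
      have hgt : ¬(j₀ ≤ m*p - (n+1)) := fun h => hne (hpre j₀ hj₀ h)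
      have hj0eq : j₀ = m*p - n := by omega
      have hpre' : ∀ l ∈ Finset.Icc 1 (m*p), l < j₀ → χ l = canonColor m l := by
        intro l hl hlt
        exact hpre l hl (by omega)
      obtain ⟨χ'', hrp, hcol, hpref⟩ := step m p hm χ hχ j₀ hj₀ hpre' hne
      obtain ⟨χ', hrtg, hfin⟩ := ih χ'' hcol (fun l hl hle' => hpref l hl (by omega))
      exact ⟨χ', Relation.ReflTransGen.head hrp hrtg, hfin⟩

theorem stmt19 (m p : ℕ) (hm : 0 < m) (hp : 0 < p) (χ : ℕ → ℕ)
    (hχ : IsColoring m p χ) :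
    ∃ χ' : ℕ → ℕ, Relation.ReflTransGen (Repaint m p) χ χ' ∧
      ∀ j ∈ Finset.Icc 1 (m * p), χ' j = canonColor m j := by
  apply main_ind m p hm (m*p) χ hχ
  intro l hl hle
  have := Finset.mem_Icc.mp hl
  exact absurd hle (by omega)
end
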